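/- Let M be an n×n real Metzler matrix (all off-diagonal entries nonnegative) and let x : [0, ∞) → ℝⁿ be a differentiable function satisfying, for every t ≥ 0 and every coordinate i, the entrywise differential inequality (d/dt) xᵢ(t) ≤ (M x(t))ᵢ. Then for every t ≥ 0 one has the entrywise inequality x(t) ≤ exp(tM) x(0). -/

import Mathlib

/-!
For `0 ≤ s ≤ t` the function `s ↦ exp((t - s) M) x(s)` has derivative
`exp((t - s) M) (x'(s) - M x(s))`, which is entrywise nonpositive because the exponential of a
Metzler matrix is entrywise nonnegative (shift `M` by a multiple of the identity to make it
nonnegative; this multiplies the exponential by a positive scalar). Hence this function decreases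
on `[0, t]`, and comparing its values at `s = t` and `s = 0` gives `x(t) ≤ exp(t M) x(0)`.
-/

open Matrix NormedSpace Set

namespace Matrix

variable {m n : Type*}

def IsMetzler (A : Matrix m m ℝ) : Prop :=
  ∀ i j, i ≠ j → 0 ≤ A i j

theorem IsMetzler.smul {A : Matrix m m ℝ} (hA : A.IsMetzler) {c : ℝ}
    (hc : 0 ≤ c) : (c • A).IsMetzler :=
  fun i j hij => mul_nonneg hc (hA i j hij)

variable [Fintype n]

theorem mulVec_nonpos {A : Matrix m n ℝ} (hA : ∀ i j, 0 ≤ A i j) {v : n → ℝ} (hv : v ≤ 0) :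
    A *ᵥ v ≤ 0 :=
  fun i => Finset.sum_nonpos fun j _ => mul_nonpos_of_nonneg_of_nonpos (hA i j) (hv j)

variable [Fintype m]

section
attribute [local instance] Matrix.linftyOpNormedAddCommGroup Matrix.linftyOpNormedSpace

theorem _root_.HasDerivWithinAt.matrix_mulVec {A : ℝ → Matrix m n ℝ} {A' : Matrix m n ℝ}
    {v : ℝ → n → ℝ} {v' : n → ℝ} {s : Set ℝ} {t : ℝ}
    (hA : HasDerivWithinAt A A' s t) (hv : HasDerivWithinAt v v' s t) :
    HasDerivWithinAt (fun t => A t *ᵥ v t) (A t *ᵥ v' + A' *ᵥ v t) s t :=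
  let B : Matrix m n ℝ →L[ℝ] (n → ℝ) →L[ℝ] m → ℝ := LinearMap.toContinuousLinearMap
    ((LinearMap.toContinuousLinearMap : _ ≃ₗ[ℝ] _).toLinearMap ∘ₗ mulVecBilin ℝ ℝ)
  B.hasDerivWithinAt_of_bilinear hA hv

end

variable [DecidableEq m]

section
attribute [local instance] Matrix.linftyOpNormedRing Matrix.linftyOpNormedAlgebra

theorem exp_apply_nonneg {A : Matrix m m ℝ} (hA : ∀ i j, 0 ≤ A i j) (i j : m) :
    0 ≤ exp A i j := by
  have hsum := (exp_series_hasSum_exp' (𝕂 := ℝ) A).map (entryLinearMap ℝ ℝ i j)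
    (continuous_id.matrix_elem i j)
  refine hsum.nonneg fun k => ?_
  simp only [Function.comp_apply, entryLinearMap_apply, smul_apply, smul_eq_mul]
  exact mul_nonneg (by positivity) (pow_apply_nonneg hA k i j)

theorem exp_algebraMap (c : ℝ) :
    exp (algebraMap ℝ (Matrix m m ℝ) c) = algebraMap ℝ (Matrix m m ℝ) (Real.exp c) := by
  rw [Real.exp_eq_exp_ℝ]
  exact (algebraMap_exp_comm c).symm

theorem hasDerivWithinAt_exp_sub_smul_mulVec (M : Matrix m m ℝ) (t : ℝ) {x : ℝ → m → ℝ}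
    {x' : m → ℝ} {s : Set ℝ} {u : ℝ} (hx : HasDerivWithinAt x x' s u) :
    HasDerivWithinAt (fun u => exp ((t - u) • M) *ᵥ x u)
      (exp ((t - u) • M) *ᵥ (x' - M *ᵥ x u)) s u := by
  have hexp : HasDerivAt (fun u : ℝ => exp ((t - u) • M)) (-(exp ((t - u) • M) * M)) u := by
    have := (hasDerivAt_exp_smul_const M (t - u)).scomp u ((hasDerivAt_id u).const_sub t)
    rwa [neg_one_smul] at this
  convert hexp.hasDerivWithinAt.matrix_mulVec hx using 1
  rw [mulVec_sub, neg_mulVec, ← mulVec_mulVec, sub_eq_add_neg]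

end

theorem IsMetzler.exp_apply_nonneg {A : Matrix m m ℝ} (hA : A.IsMetzler) (i j : m) :
    0 ≤ exp A i j := by
  obtain ⟨c, hc⟩ := (finite_range fun k => A k k).bddBelow
  set N := A - algebraMap ℝ (Matrix m m ℝ) c
  have hN : ∀ i j, 0 ≤ N i j := by
    intro i j
    rcases eq_or_ne i j with rfl | hij
    · simpa [N, algebraMap_eq_diagonal] using hc ⟨i, rfl⟩
    · simpa [N, algebraMap_eq_diagonal, hij] using hA i j hij
  rw [← sub_add_cancel A (algebraMap ℝ _ c), exp_add_of_commute _ _ (Algebra.commutes c N).symm,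
    exp_algebraMap, ← Algebra.commutes, ← Algebra.smul_def, smul_apply, smul_eq_mul]
  exact mul_nonneg (Real.exp_pos c).le (Matrix.exp_apply_nonneg hN i j)

end Matrix

theorem le_of_hasDerivWithinAt_Ici_nonpos {f f' : ℝ → ℝ} {a b : ℝ} (hab : a ≤ b)
    (hf : ∀ x ∈ Icc a b, HasDerivWithinAt f (f' x) (Ici a) x) (hf' : ∀ x ∈ Ico a b, f' x ≤ 0) :
    f b ≤ f a :=
  image_le_of_deriv_right_le_deriv_boundary (B := fun _ => f a) (B' := 0)
    (fun x hx => (hf x hx).continuousWithinAt.mono Icc_subset_Ici_self)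
    (fun x hx => (hf x (Ico_subset_Icc_self hx)).mono (Ici_subset_Ici.2 hx.1))
    le_rfl continuousOn_const (fun _ _ => hasDerivWithinAt_const _ _ _) hf'
    (right_mem_Icc.2 hab)

/-- Comparison principle: if `M` is Metzler and `x : [0,∞) → ℝⁿ` is differentiable with
`(d/dt) xᵢ(t) ≤ (M x(t))ᵢ` for all `t ≥ 0` and all `i`, then `x(t) ≤ exp(t M) x(0)`
entrywise for all `t ≥ 0`. -/
theorem metzler_comparison_principle
    (n : ℕ) (M : Matrix (Fin n) (Fin n) ℝ)
    (hMetzler : ∀ i j, i ≠ j → 0 ≤ M i j)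
    (x x' : ℝ → Fin n → ℝ)
    (hderiv : ∀ t ∈ Set.Ici (0 : ℝ), HasDerivWithinAt x (x' t) (Set.Ici 0) t)
    (hineq : ∀ t ∈ Set.Ici (0 : ℝ), ∀ i, x' t i ≤ (M *ᵥ x t) i) :
    ∀ t ∈ Set.Ici (0 : ℝ), ∀ i, x t i ≤ ((NormedSpace.exp (t • M)) *ᵥ x 0) i := by
  intro t ht i
  have hM : M.IsMetzler := hMetzler
  set φ : ℝ → ℝ := fun s => (exp ((t - s) • M) *ᵥ x s) i
  have hφ_deriv (s : ℝ) (hs : s ∈ Icc 0 t) :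
      HasDerivWithinAt φ ((exp ((t - s) • M) *ᵥ (x' s - M *ᵥ x s)) i) (Ici 0) s :=
    hasDerivWithinAt_pi.1 (hasDerivWithinAt_exp_sub_smul_mulVec M t (hderiv s hs.1)) i
  have hφ_deriv_nonpos (s : ℝ) (hs : s ∈ Ico 0 t) :
      (exp ((t - s) • M) *ᵥ (x' s - M *ᵥ x s)) i ≤ 0 :=
    mulVec_nonpos ((hM.smul (sub_nonneg.2 hs.2.le)).exp_apply_nonneg)
      (fun j => sub_nonpos.2 (hineq s hs.1 j)) i
  simpa [φ] using le_of_hasDerivWithinAt_Ici_nonpos ht hφ_deriv hφ_deriv_nonpos
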